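/- arXiv:math/0612101 — 5 statements merged into one kernel-verified Lean document; each statement's English description precedes it below -/
import Mathlib

section
/- Let (g,⟨·,·⟩) be a metric Lie algebra and i ⊆ g an isotropic ideal (i.e. ⟨·,·⟩ vanishes on i×i, equivalently i ⊆ i^⊥) such that the quotient Lie algebra i^⊥/i is abelian. Then i^⊥ is 2-step nilpotent: [i^⊥,[i^⊥,i^⊥]] = 0. -/
/-!
Invariance moves the bracket across the form: for `u ∈ I`, `x ∈ I^⊥` and any `w`,
`⟨w, [u, x]⟩ = -⟨[u, w], x⟩ = 0` because `[u, w] ∈ I`, so nondegeneracy gives `[I^⊥, I] = 0`.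
As `[y, z] ∈ I` for `y, z ∈ I^⊥`, this kills `[x, [y, z]]`.
-/

namespace LinearMap.BilinForm

variable {R L : Type*} [CommRing R] [LieRing L] [LieAlgebra R L]

theorem lieInvariant_of_associative {B : LinearMap.BilinForm R L}
    (hB : ∀ x y z : L, B ⁅x, y⁆ z = B x ⁅y, z⁆) : B.lieInvariant L := by
  intro x y z
  rw [← lie_skew, map_neg, LinearMap.neg_apply, hB]

theorem lie_eq_zero_of_mem_orthogonal {B : LinearMap.BilinForm R L} (hB : B.SeparatingRight)
    (hB_inv : B.lieInvariant L) {I : LieIdeal R L} {x u : L}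
    (hx : x ∈ B.orthogonal (I : Submodule R L)) (hu : u ∈ I) : ⁅x, u⁆ = 0 := by
  rw [← lie_skew, neg_eq_zero]
  refine hB _ fun w ↦ ?_
  rw [← neg_eq_zero, ← hB_inv]
  exact hx _ (lie_mem_left R L I u w hu)

end LinearMap.BilinForm

theorem orthogonal_two_step_nilpotent_general
    (g : Type*) [LieRing g] [LieAlgebra ℝ g]
    (B : LinearMap.BilinForm ℝ g)
    (hnd : B.Nondegenerate)
    (hinv : ∀ x y z : g, B ⁅x, y⁆ z = B x ⁅y, z⁆)
    (I : LieIdeal ℝ g)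
    (hab : ∀ x ∈ B.orthogonal (I : Submodule ℝ g), ∀ y ∈ B.orthogonal (I : Submodule ℝ g),
      ⁅x, y⁆ ∈ I) :
    ∀ x ∈ B.orthogonal (I : Submodule ℝ g), ∀ y ∈ B.orthogonal (I : Submodule ℝ g),
      ∀ z ∈ B.orthogonal (I : Submodule ℝ g), ⁅x, ⁅y, z⁆⁆ = 0 :=
  fun _x hx y hy z hz ↦ LinearMap.BilinForm.lie_eq_zero_of_mem_orthogonal hnd.2
    (LinearMap.BilinForm.lieInvariant_of_associative hinv) hx (hab y hy z hz)

/-- In a metric Lie algebra, if `i` is an isotropic ideal such that `i^⊥/i` is abelian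
(i.e. `[i^⊥, i^⊥] ⊆ i`), then `i^⊥` is 2-step nilpotent: `[i^⊥, [i^⊥, i^⊥]] = 0`. -/
theorem orthogonal_two_step_nilpotent
    (g : Type*) [LieRing g] [LieAlgebra ℝ g] [FiniteDimensional ℝ g]
    (B : LinearMap.BilinForm ℝ g)
    (hsymm : ∀ x y : g, B x y = B y x)
    (hnd : B.Nondegenerate)
    (hinv : ∀ x y z : g, B ⁅x, y⁆ z = B x ⁅y, z⁆)
    (I : LieIdeal ℝ g)
    (hiso : ∀ x ∈ I, ∀ y ∈ I, B x y = 0)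
    (hab : ∀ x ∈ B.orthogonal (I : Submodule ℝ g), ∀ y ∈ B.orthogonal (I : Submodule ℝ g),
      ⁅x, y⁆ ∈ I) :
    ∀ x ∈ B.orthogonal (I : Submodule ℝ g), ∀ y ∈ B.orthogonal (I : Submodule ℝ g),
      ∀ z ∈ B.orthogonal (I : Submodule ℝ g), ⁅x, ⁅y, z⁆⁆ = 0 :=
  orthogonal_two_step_nilpotent_general g B hnd hinv I hab
end

section
/- Let l be a finite-dimensional real Lie algebra, (a,⟨·,·⟩_a) a pseudo-Euclidean vector space with an orthogonal representation ρ: l → so(a), α ∈ Hom(Λ²l, a) and γ ∈ Hom(Λ³l, ℝ). Define on d = l* ⊕ a ⊕ l the bracket [L₁,L₂] = γ(L₁,L₂,·) + α(L₁,L₂) + [L₁,L₂]_l, [L,A] = -⟨A, α(L,·)⟩_a + ρ(L)A, [A₁,A₂] = ⟨ρ(·)A₁, A₂⟩_a ∈ l*, [L,Z] = ad*(L)Z, [l*, l* ⊕ a] = 0. If this bracket satisfies the Jacobi identity, then the inner product ⟨Z₁+A₁+L₁, Z₂+A₂+L₂⟩ = ⟨A₁,A₂⟩_a + Z₁(L₂)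 + Z₂(L₁) is invariant, i.e. d_{α,γ}(l,a) is a metric Lie algebra. -/
/-!
Symmetry and non-degeneracy of the inner product are read off componentwise. For invariance,
expand `⟨[x,y],z⟩ + ⟨y,[x,z]⟩`: the `l*`-components cancel in pairs, and every remaining pair of
terms vanishes by one structural property: symmetry of `⟨·,·⟩_a`, orthogonality of `ρ`,
antisymmetry of `α`, of `γ` in its last two slots, and of the bracket of `l`.
-/

/-- The bracket of the quadratic extension `d_{α,γ}(l,a)` on `l* ⊕ a ⊕ l`. -/
noncomputable def dBracket {l a : Type*} [LieRing l] [LieAlgebra ℝ l]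
    [AddCommGroup a] [Module ℝ a]
    (Ba : LinearMap.BilinForm ℝ a) (ρ : l →ₗ[ℝ] a →ₗ[ℝ] a)
    (α : l →ₗ[ℝ] l →ₗ[ℝ] a) (γ : l →ₗ[ℝ] l →ₗ[ℝ] l →ₗ[ℝ] ℝ)
    (x y : Module.Dual ℝ l × a × l) : Module.Dual ℝ l × a × l :=
  (γ x.2.2 y.2.2
      - (Ba y.2.1).comp (α x.2.2) + (Ba x.2.1).comp (α y.2.2)
      + (Ba.flip y.2.1).comp (ρ.flip x.2.1)
      - y.1.comp ((LieAlgebra.ad ℝ l x.2.2 : l →ₗ[ℝ] l))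
      + x.1.comp ((LieAlgebra.ad ℝ l y.2.2 : l →ₗ[ℝ] l)),
    α x.2.2 y.2.2 + ρ x.2.2 y.2.1 - ρ y.2.2 x.2.1,
    ⁅x.2.2, y.2.2⁆)

/-- The inner product of the quadratic extension `d_{α,γ}(l,a)` on `l* ⊕ a ⊕ l`. -/
def dInner {l a : Type*} [LieRing l] [LieAlgebra ℝ l]
    [AddCommGroup a] [Module ℝ a]
    (Ba : LinearMap.BilinForm ℝ a)
    (x y : Module.Dual ℝ l × a × l) : ℝ :=
  Ba x.2.1 y.2.1 + x.1 y.2.2 + y.1 x.2.2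

section QuadraticExtension

variable {l a : Type*} [LieRing l] [LieAlgebra ℝ l] [AddCommGroup a] [Module ℝ a]
  {Ba : LinearMap.BilinForm ℝ a}

theorem dInner_comm (hBa : ∀ A B : a, Ba A B = Ba B A) (x y : Module.Dual ℝ l × a × l) :
    dInner Ba x y = dInner Ba y x := by
  simp only [dInner, hBa x.2.1]
  ring

theorem eq_zero_of_forall_dInner_eq_zero (hBa : Ba.SeparatingLeft)
    (x : Module.Dual ℝ l × a × l) (hx : ∀ y, dInner Ba x y = 0) : x = 0 := by
  obtain ⟨Z, A, L⟩ := x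
  have hA : A = 0 := hBa A fun B ↦ by simpa [dInner] using hx (0, B, 0)
  have hL : L = 0 :=
    (Module.forall_dual_apply_eq_zero_iff ℝ L).1 fun W ↦ by simpa [dInner] using hx (W, 0, 0)
  have hZ : Z = 0 := LinearMap.ext fun M ↦ by simpa [dInner] using hx (0, 0, M)
  simp [hA, hL, hZ]

theorem dInner_dBracket_add_dInner_dBracket (hBa : ∀ A B : a, Ba A B = Ba B A)
    {ρ : l →ₗ[ℝ] a →ₗ[ℝ] a} (hρ : ∀ (L : l) (A B : a), Ba (ρ L A) B + Ba A (ρ L B) = 0)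
    {α : l →ₗ[ℝ] l →ₗ[ℝ] a} (hα : α.IsAlt)
    {γ : l →ₗ[ℝ] l →ₗ[ℝ] l →ₗ[ℝ] ℝ} (hγ : ∀ L, (γ L).IsAlt)
    (x y z : Module.Dual ℝ l × a × l) :
    dInner Ba (dBracket Ba ρ α γ x y) z + dInner Ba y (dBracket Ba ρ α γ x z) = 0 := by
  obtain ⟨Z₁, A₁, L₁⟩ := x
  obtain ⟨Z₂, A₂, L₂⟩ := y
  obtain ⟨Z₃, A₃, L₃⟩ := z
  simp only [dInner, dBracket, LinearMap.add_apply, LinearMap.sub_apply, map_add, map_sub,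
    LinearMap.coe_comp, Function.comp_apply, LinearMap.flip_apply, LieAlgebra.ad_apply]
  have hflip : ∀ A B : a, Ba.flip A B = Ba B A := fun _ _ ↦ rfl
  rw [hflip, hflip]
  have hρ₁ := hρ L₁ A₂ A₃
  have hα₁₂ := hBa (α L₁ L₂) A₃
  have hρ₃ := hBa (ρ L₃ A₁) A₂
  have hα₂₃ : Ba A₁ (α L₃ L₂) = -Ba A₁ (α L₂ L₃) := by rw [← hα.neg, map_neg]
  have hγ₁ : γ L₁ L₃ L₂ = -γ L₁ L₂ L₃ := ((hγ L₁).neg L₂ L₃).symm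
  have hlie : Z₁ ⁅L₃, L₂⁆ = -Z₁ ⁅L₂, L₃⁆ := by rw [← lie_skew L₃ L₂, map_neg]
  linarith

end QuadraticExtension

theorem dExtension_metric_general
    (l a : Type*) [LieRing l] [LieAlgebra ℝ l]
    [AddCommGroup a] [Module ℝ a]
    (Ba : LinearMap.BilinForm ℝ a)
    (hBa_symm : ∀ A B : a, Ba A B = Ba B A)
    (hBa_nd : Ba.Nondegenerate)
    (ρ : l →ₗ[ℝ] a →ₗ[ℝ] a)
    (hρorth : ∀ (L : l) (A B : a), Ba (ρ L A) B + Ba A (ρ L B) = 0)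
    (α : l →ₗ[ℝ] l →ₗ[ℝ] a) (hα : ∀ L : l, α L L = 0)
    (γ : l →ₗ[ℝ] l →ₗ[ℝ] l →ₗ[ℝ] ℝ)
    (hγ2 : ∀ L M : l, γ L M M = 0) :
    (∀ x y : Module.Dual ℝ l × a × l, dInner Ba x y = dInner Ba y x) ∧
    (∀ x : Module.Dual ℝ l × a × l, (∀ y, dInner Ba x y = 0) → x = 0) ∧
    (∀ x y z : Module.Dual ℝ l × a × l,
      dInner Ba (dBracket Ba ρ α γ x y) z + dInner Ba y (dBracket Ba ρ α γ x z) = 0) :=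
  ⟨dInner_comm hBa_symm, eq_zero_of_forall_dInner_eq_zero hBa_nd.1,
    dInner_dBracket_add_dInner_dBracket hBa_symm hρorth hα hγ2⟩

/-- If the bracket of `d = l* ⊕ a ⊕ l` defined from an orthogonal representation `ρ`, a
2-cochain `α` and a 3-cochain `γ` satisfies the Jacobi identity, then the inner product
`⟨Z₁+A₁+L₁, Z₂+A₂+L₂⟩ = ⟨A₁,A₂⟩_a + Z₁(L₂) + Z₂(L₁)` is symmetric, non-degenerate and
invariant: `d_{α,γ}(l,a)` is a metric Lie algebra. -/
theorem dExtension_metric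
    (l a : Type*) [LieRing l] [LieAlgebra ℝ l] [FiniteDimensional ℝ l]
    [AddCommGroup a] [Module ℝ a] [FiniteDimensional ℝ a]
    (Ba : LinearMap.BilinForm ℝ a)
    (hBa_symm : ∀ A B : a, Ba A B = Ba B A)
    (hBa_nd : Ba.Nondegenerate)
    (ρ : l →ₗ[ℝ] a →ₗ[ℝ] a)
    (hρrep : ∀ L₁ L₂ : l, ρ ⁅L₁, L₂⁆ = ρ L₁ ∘ₗ ρ L₂ - ρ L₂ ∘ₗ ρ L₁)
    (hρorth : ∀ (L : l) (A B : a), Ba (ρ L A) B + Ba A (ρ L B) = 0)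
    (α : l →ₗ[ℝ] l →ₗ[ℝ] a) (hα : ∀ L : l, α L L = 0)
    (γ : l →ₗ[ℝ] l →ₗ[ℝ] l →ₗ[ℝ] ℝ)
    (hγ1 : ∀ L M : l, γ L L M = 0) (hγ2 : ∀ L M : l, γ L M M = 0)
    (hJacobi : ∀ x y z : Module.Dual ℝ l × a × l,
      dBracket Ba ρ α γ x (dBracket Ba ρ α γ y z)
        + dBracket Ba ρ α γ y (dBracket Ba ρ α γ z x)
        + dBracket Ba ρ α γ z (dBracket Ba ρ α γ x y) = 0) :
    (∀ x y : Module.Dual ℝ l × a × l, dInner Ba x y = dInner Ba y x) ∧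
    (∀ x : Module.Dual ℝ l × a × l, (∀ y, dInner Ba x y = 0) → x = 0) ∧
    (∀ x y z : Module.Dual ℝ l × a × l,
      dInner Ba (dBracket Ba ρ α γ x y) z + dInner Ba y (dBracket Ba ρ α γ x z) = 0) :=
  dExtension_metric_general l a Ba hBa_symm hBa_nd ρ hρorth α hα γ hγ2
end

section
/- In the setting of the quadratic extension d_{α,γ}(l,a): the Jacobi identity for the bracket defined on d = l* ⊕ a ⊕ l holds if and only if α and γ satisfy dα = 0 and dγ = (1/2)⟨α ∧ α⟩, where d is the Lie algebra cochain differential (with coefficients in a for α via ρ, and trivial coefficients for γ) and ⟨α∧α⟩(L₁,L₂,L₃,L₄) is the scalar-valued 4-form obtained by wedging α with itself using ⟨·,·⟩_a. -/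
set_option maxHeartbeats 2000000 in
/-- The Jacobi identity for the bracket of `d = l* ⊕ a ⊕ l` holds if and only if
`(α,γ)` is a quadratic cocycle: `dα = 0` and `dγ = ½⟨α ∧ α⟩`. -/
theorem dExtension_jacobi_iff_cocycle
    (l a : Type*) [LieRing l] [LieAlgebra ℝ l] [FiniteDimensional ℝ l]
    [AddCommGroup a] [Module ℝ a] [FiniteDimensional ℝ a]
    (Ba : LinearMap.BilinForm ℝ a)
    (hBa_symm : ∀ A B : a, Ba A B = Ba B A)
    (hBa_nd : Ba.Nondegenerate)
    (ρ : l →ₗ[ℝ] a →ₗ[ℝ] a)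
    (hρrep : ∀ L₁ L₂ : l, ρ ⁅L₁, L₂⁆ = ρ L₁ ∘ₗ ρ L₂ - ρ L₂ ∘ₗ ρ L₁)
    (hρorth : ∀ (L : l) (A B : a), Ba (ρ L A) B + Ba A (ρ L B) = 0)
    (α : l →ₗ[ℝ] l →ₗ[ℝ] a) (hα : ∀ L : l, α L L = 0)
    (γ : l →ₗ[ℝ] l →ₗ[ℝ] l →ₗ[ℝ] ℝ)
    (hγ1 : ∀ L M : l, γ L L M = 0) (hγ2 : ∀ L M : l, γ L M M = 0) :
    (∀ x y z : Module.Dual ℝ l × a × l,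
      dBracket Ba ρ α γ x (dBracket Ba ρ α γ y z)
        + dBracket Ba ρ α γ y (dBracket Ba ρ α γ z x)
        + dBracket Ba ρ α γ z (dBracket Ba ρ α γ x y) = 0)
    ↔
    ((∀ L₁ L₂ L₃ : l,
        ρ L₁ (α L₂ L₃) - ρ L₂ (α L₁ L₃) + ρ L₃ (α L₁ L₂)
          - α ⁅L₁, L₂⁆ L₃ + α ⁅L₁, L₃⁆ L₂ - α ⁅L₂, L₃⁆ L₁ = 0) ∧
     (∀ L₁ L₂ L₃ L₄ : l,
        - γ ⁅L₁, L₂⁆ L₃ L₄ + γ ⁅L₁, L₃⁆ L₂ L₄ - γ ⁅L₁, L₄⁆ L₂ L₃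
          - γ ⁅L₂, L₃⁆ L₁ L₄ + γ ⁅L₂, L₄⁆ L₁ L₃ - γ ⁅L₃, L₄⁆ L₁ L₂
        = Ba (α L₁ L₂) (α L₃ L₄) - Ba (α L₁ L₃) (α L₂ L₄) + Ba (α L₁ L₄) (α L₂ L₃))) := by
  -- helper lemmas
  have hα' : ∀ L M : l, α L M = - α M L := by
    intro L M
    have h := hα (L + M)
    simp only [map_add, LinearMap.add_apply, hα] at h
    linear_combination (norm := module) h
  have hρrep' : ∀ (L M : l) (A : a), ρ ⁅L, M⁆ A = ρ L (ρ M A) - ρ M (ρ L A) := by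
    intro L M A
    rw [hρrep]; rfl
  have hskew : ∀ L M N : l, α ⁅L, M⁆ N = - α ⁅M, L⁆ N := by
    intro L M N
    rw [neg_eq_iff_eq_neg.mp (lie_skew M L), map_neg, LinearMap.neg_apply]
  have hρα : ∀ K L M : l, ρ K (α L M) = - ρ K (α M L) := by
    intro K L M
    rw [hα' L M, map_neg]
  have g12 : ∀ X Y Z : l, γ X Y Z = - γ Y X Z := by
    intro X Y Z
    have h := hγ1 (X + Y) Z
    simp only [map_add, LinearMap.add_apply, hγ1, zero_add, add_zero] at h
    linarith
  have g23 : ∀ X Y Z : l, γ X Y Z = - γ X Z Y := by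
    intro X Y Z
    have h := hγ2 X (Y + Z)
    simp only [map_add, LinearMap.add_apply, hγ2, zero_add, add_zero] at h
    linarith
  have gskew : ∀ X Y Z W : l, γ ⁅X, Y⁆ Z W = - γ ⁅Y, X⁆ Z W := by
    intro X Y Z W
    rw [neg_eq_iff_eq_neg.mp (lie_skew Y X), map_neg, LinearMap.neg_apply,
      LinearMap.neg_apply]
  have hξ : ∀ (ξ : Module.Dual ℝ l) (X Y N : l),
      ξ ⁅⁅X, Y⁆, N⁆ = ξ ⁅X, ⁅Y, N⁆⁆ - ξ ⁅Y, ⁅X, N⁆⁆ := by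
    intro ξ X Y N
    rw [lie_lie, map_sub]
  have hBaα : ∀ (A : a) (X Y : l), Ba A (α X Y) = - Ba A (α Y X) := by
    intro A X Y
    rw [hα' X Y, map_neg]
  have hBaα₁ : ∀ (X Y : l) (C : a), Ba (α X Y) C = - Ba (α Y X) C := by
    intro X Y C
    rw [hα' X Y, map_neg, LinearMap.neg_apply]
  have hE : ∀ (L N : l) (A B : a),
      Ba (ρ ⁅L, N⁆ A) B + Ba (ρ N A) (ρ L B) - Ba (ρ N B) (ρ L A) = 0 := by
    intro L N A B
    have h := congrArg (fun v => Ba v B) (hρrep' L N A)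
    simp only [map_sub, LinearMap.sub_apply] at h
    linear_combination h + hρorth L (ρ N A) B - hρorth N (ρ L A) B
      + hBa_symm (ρ L A) (ρ N B)
  have hflip : ∀ (x v : a), Ba.flip x v = Ba v x := fun _ _ => rfl
  have hρflip : ∀ (A : a) (N : l), ρ.flip A N = ρ N A := fun _ _ => rfl
  constructor
  · intro hJac
    constructor
    · intro L₁ L₂ L₃
      have J := hJac (0, (0, L₁)) (0, (0, L₂)) (0, (0, L₃))
      simp only [dBracket, Prod.mk_add_mk, Prod.mk_eq_zero, map_zero,
        LinearMap.zero_comp, LinearMap.comp_zero, LinearMap.zero_apply,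
        add_zero, zero_add, sub_zero, zero_sub, neg_zero] at J
      have J2 := J.2.1
      linear_combination (norm := module) J2 - hρα L₂ L₁ L₃ - hα' ⁅L₁, L₂⁆ L₃
        + hskew L₃ L₁ L₂ - hα' ⁅L₃, L₁⁆ L₂ - hα' ⁅L₂, L₃⁆ L₁
    · intro L₁ L₂ L₃ L₄
      have J := hJac (0, (0, L₁)) (0, (0, L₂)) (0, (0, L₃))
      simp only [dBracket, Prod.mk_add_mk, Prod.mk_eq_zero, map_zero,
        LinearMap.zero_comp, LinearMap.comp_zero, LinearMap.zero_apply,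
        add_zero, zero_add, sub_zero, zero_sub, neg_zero] at J
      have J1 := DFunLike.congr_fun J.1 L₄
      simp only [LinearMap.add_apply, LinearMap.sub_apply, LinearMap.comp_apply,
        LinearMap.zero_apply, LieAlgebra.ad_apply, LinearMap.neg_apply] at J1
      linear_combination J1 - g12 L₁ ⁅L₂, L₃⁆ L₄ - g12 L₂ ⁅L₃, L₁⁆ L₄
        + gskew L₃ L₁ L₂ L₄ - g12 L₃ ⁅L₁, L₂⁆ L₄
        + g23 L₂ L₃ ⁅L₁, L₄⁆ - g12 L₂ ⁅L₁, L₄⁆ L₃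
        + g23 L₃ L₁ ⁅L₂, L₄⁆ - g12 L₃ ⁅L₂, L₄⁆ L₁ + g23 ⁅L₂, L₄⁆ L₃ L₁
        + g23 L₁ L₂ ⁅L₃, L₄⁆ - g12 L₁ ⁅L₃, L₄⁆ L₂
        + hBa_symm (α L₂ L₃) (α L₁ L₄) + hBaα₁ L₃ L₁ (α L₂ L₄)
  · rintro ⟨h1, h2⟩ ⟨ξ₁, A₁, L₁⟩ ⟨ξ₂, A₂, L₂⟩ ⟨ξ₃, A₃, L₃⟩
    simp only [dBracket, Prod.mk_add_mk, Prod.mk_eq_zero, Prod.ext_iff,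
      Prod.fst_zero, Prod.snd_zero]
    refine ⟨?_, ?_, ?_⟩
    · ext M
      simp only [LinearMap.add_apply, LinearMap.sub_apply, LinearMap.comp_apply,
        LinearMap.flip_apply, LinearMap.zero_apply, LieAlgebra.ad_apply,
        map_add, map_sub, hflip, hρflip]
      have eB1 := congrArg (Ba A₁) (h1 L₂ L₃ M)
      have eB2 := congrArg (Ba A₂) (h1 L₃ L₁ M)
      have eB3 := congrArg (Ba A₃) (h1 L₁ L₂ M)
      simp only [map_add, map_sub, map_zero] at eB1 eB2 eB3
      linear_combination h2 L₁ L₂ L₃ M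
        + hξ ξ₁ L₂ L₃ M + hξ ξ₂ L₃ L₁ M + hξ ξ₃ L₁ L₂ M
        - hE L₂ M A₃ A₁ - hE L₁ M A₂ A₃ - hE L₃ M A₁ A₂
        - eB1 + hρorth M A₁ (α L₂ L₃) - hρorth L₃ A₁ (α L₂ M) + hρorth L₂ A₁ (α L₃ M)
          + hBaα A₁ L₃ ⁅L₂, M⁆ - hBaα A₁ L₂ ⁅L₃, M⁆
        - eB2 + hρorth M A₂ (α L₃ L₁) - hρorth L₁ A₂ (α L₃ M) + hρorth L₃ A₂ (α L₁ M)
          + hBaα A₂ L₁ ⁅L₃, M⁆ - hBaα A₂ L₃ ⁅L₁, M⁆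
        - eB3 + hρorth M A₃ (α L₁ L₂) - hρorth L₂ A₃ (α L₁ M) + hρorth L₁ A₃ (α L₂ M)
          + hBaα A₃ L₂ ⁅L₁, M⁆ - hBaα A₃ L₁ ⁅L₂, M⁆
        + g12 L₁ ⁅L₂, L₃⁆ M + g12 L₂ ⁅L₃, L₁⁆ M - gskew L₃ L₁ L₂ M + g12 L₃ ⁅L₁, L₂⁆ M
        - g23 L₂ L₃ ⁅L₁, M⁆ + g12 L₂ ⁅L₁, M⁆ L₃
        - g23 L₃ L₁ ⁅L₂, M⁆ + g12 L₃ ⁅L₂, M⁆ L₁ - g23 ⁅L₂, M⁆ L₃ L₁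
        - g23 L₁ L₂ ⁅L₃, M⁆ + g12 L₁ ⁅L₃, M⁆ L₂
        - hBa_symm (α L₂ L₃) (α L₁ M) - hBaα₁ L₃ L₁ (α L₂ M)
    · simp only [map_add, map_sub]
      linear_combination (norm := module) (h1 L₁ L₂ L₃) - hρrep' L₂ L₃ A₁ - hρrep' L₃ L₁ A₂
        - hρrep' L₁ L₂ A₃ + hα' L₁ ⁅L₂, L₃⁆ + hα' L₂ ⁅L₃, L₁⁆ + hα' L₃ ⁅L₁, L₂⁆
        - hskew L₃ L₁ L₂ + hρα L₂ L₃ L₁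
    · exact lie_jacobi L₁ L₂ L₃
end

section
/- Let (g,Φ,⟨·,·⟩), Φ = (D,θ), be a Lie algebra with an invariant inner product, an isometric involution θ, and an antisymmetric derivation D with Dθ = -θD and D³ = -D. Define g⁺ = ker D and g⁻ = {X : D²X = -X} (so g = g⁺ ⊕ g⁻), and let τ_D be the involution which is +1 on g⁺ and -1 on g⁻. Then τ_D is a Lie algebra automorphism of g commuting with θ, and g⁺ is a subalgebra with [g⁻,g⁻] ⊆ g⁺, [g⁺,g⁻] ⊆ g⁻. -/
/-- Let `(g,⟨·,·⟩)` be a metric Lie algebra with an isometric involutive automorphism `θ`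
and an antisymmetric derivation `D` satisfying `Dθ = -θD` and `D³ = -D`.  Set
`g⁺ = ker D` and `g⁻ = {X : D²X = -X}`.  Then `g = g⁺ ⊕ g⁻`, `g⁺` is a subalgebra with
`[g⁻,g⁻] ⊆ g⁺` and `[g⁺,g⁻] ⊆ g⁻`, and the involution `τ_D` which is `+1` on `g⁺` and
`-1` on `g⁻` is a Lie algebra automorphism of `g` commuting with `θ`. -/
theorem tauD_automorphism
    (g : Type*) [LieRing g] [LieAlgebra ℝ g] [FiniteDimensional ℝ g]
    (B : LinearMap.BilinForm ℝ g)
    (hsymm : ∀ x y : g, B x y = B y x)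
    (hnd : B.Nondegenerate)
    (hinv : ∀ x y z : g, B ⁅x, y⁆ z = B x ⁅y, z⁆)
    (θ : g ≃ₗ[ℝ] g)
    (hθbr : ∀ x y : g, θ ⁅x, y⁆ = ⁅θ x, θ y⁆)
    (hθ2 : ∀ x : g, θ (θ x) = x)
    (hθiso : ∀ x y : g, B (θ x) (θ y) = B x y)
    (D : g →ₗ[ℝ] g)
    (hder : ∀ x y : g, D ⁅x, y⁆ = ⁅D x, y⁆ + ⁅x, D y⁆)
    (hanti : ∀ x y : g, B (D x) y + B x (D y) = 0)
    (hDθ : ∀ x : g, D (θ x) = - θ (D x))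
    (hD3 : ∀ x : g, D (D (D x)) = - D x) :
    (LinearMap.ker D ⊓ LinearMap.ker (D ∘ₗ D + LinearMap.id) = ⊥ ∧
     LinearMap.ker D ⊔ LinearMap.ker (D ∘ₗ D + LinearMap.id) = ⊤) ∧
    (∀ x ∈ LinearMap.ker D, ∀ y ∈ LinearMap.ker D, ⁅x, y⁆ ∈ LinearMap.ker D) ∧
    (∀ x ∈ LinearMap.ker (D ∘ₗ D + LinearMap.id),
      ∀ y ∈ LinearMap.ker (D ∘ₗ D + LinearMap.id), ⁅x, y⁆ ∈ LinearMap.ker D) ∧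
    (∀ x ∈ LinearMap.ker D, ∀ y ∈ LinearMap.ker (D ∘ₗ D + LinearMap.id),
      ⁅x, y⁆ ∈ LinearMap.ker (D ∘ₗ D + LinearMap.id)) ∧
    (∃ τ : g ≃ₗ[ℝ] g,
      (∀ x ∈ LinearMap.ker D, τ x = x) ∧
      (∀ x ∈ LinearMap.ker (D ∘ₗ D + LinearMap.id), τ x = -x) ∧
      (∀ x y : g, τ ⁅x, y⁆ = ⁅τ x, τ y⁆) ∧
      (∀ x : g, τ (θ x) = θ (τ x))) := by
  -- membership in the two eigenspaces
  have hmem : ∀ x : g, x ∈ LinearMap.ker (D ∘ₗ D + LinearMap.id) ↔ D (D x) = -x := by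
    intro x
    rw [LinearMap.mem_ker, LinearMap.add_apply, LinearMap.comp_apply, LinearMap.id_apply,
      add_eq_zero_iff_eq_neg]
  have hmemD : ∀ x : g, x ∈ LinearMap.ker D ↔ D x = 0 := fun x => LinearMap.mem_ker
  -- key lemma : the bracket of two elements of g⁻ is killed by D
  have key : ∀ x y : g, D (D x) = -x → D (D y) = -y → D ⁅x, y⁆ = 0 := by
    intro x y hx hy
    have h1 : D ⁅x, y⁆ = ⁅D x, y⁆ + ⁅x, D y⁆ := hder x y
    have h2 : D (D ⁅x, y⁆) = -⁅x, y⁆ + (⁅D x, D y⁆ + ⁅D x, D y⁆) + -⁅x, y⁆ := by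
      rw [h1, map_add, hder, hder, hx, hy, neg_lie, lie_neg]; abel
    have h3 : D (D (D ⁅x, y⁆)) =
        -(D ⁅x, y⁆ + D ⁅x, y⁆ + D ⁅x, y⁆ + D ⁅x, y⁆) := by
      rw [h2]
      have hDD : D ⁅D x, D y⁆ = -(D ⁅x, y⁆) := by
        rw [hder, hx, hy, h1, neg_lie, lie_neg]; abel
      simp only [map_add, map_neg, hDD]
      abel
    have h4 : D ⁅x, y⁆ + D ⁅x, y⁆ + D ⁅x, y⁆ = 0 := by
      have h5 := (hD3 ⁅x, y⁆).symm.trans h3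
      have h6 : D ⁅x, y⁆ = D ⁅x, y⁆ + D ⁅x, y⁆ + D ⁅x, y⁆ + D ⁅x, y⁆ :=
        neg_injective h5
      have h7 := congrArg (fun t => t - D ⁅x, y⁆) h6
      simpa using h7.symm
    have h8 : (3 : ℝ) • D ⁅x, y⁆ = 0 := by
      rw [show (3 : ℝ) • D ⁅x, y⁆ = D ⁅x, y⁆ + D ⁅x, y⁆ + D ⁅x, y⁆ by module]
      exact h4
    rcases smul_eq_zero.mp h8 with h | h
    · norm_num at h
    · exact h
  -- D x always lies in g⁻
  have hDneg : ∀ x : g, D (D (D x)) = -(D x) := hD3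
  -- brackets of D-images
  have hkey2 : ∀ x y : g, ⁅D (D x), D (D y)⁆ = ⁅D x, D y⁆ := by
    intro x y
    have h0 : D ⁅D (D x), D y⁆ = 0 := by
      apply key
      · exact hD3 (D x)
      · exact hD3 y
    have h1 : ⁅D (D (D x)), D y⁆ + ⁅D (D x), D (D y)⁆ = 0 := by
      rw [← hder]; exact h0
    rw [hD3, neg_lie] at h1
    linear_combination (norm := abel) h1
  -- the involution τ = id + 2 D²
  set L : g →ₗ[ℝ] g := LinearMap.id + (2 : ℝ) • (D ∘ₗ D) with hL
  have hLapp : ∀ x : g, L x = x + (2 : ℝ) • D (D x) := by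
    intro x
    simp [hL, LinearMap.add_apply, LinearMap.smul_apply]
  have hD4 : ∀ x : g, D (D (D (D x))) = -(D (D x)) := by
    intro x; exact hD3 (D x)
  have hLinv : Function.Involutive L := by
    intro x
    rw [hLapp, hLapp, map_add, map_add, map_smul, map_smul, hD4]
    module
  refine ⟨⟨?_, ?_⟩, ?_, ?_, ?_, ?_⟩
  · -- trivial intersection
    rw [eq_bot_iff]
    intro x hx
    obtain ⟨hx1, hx2⟩ := Submodule.mem_inf.mp hx
    rw [hmemD] at hx1
    rw [hmem x] at hx2
    have : (0 : g) = -x := by rw [← hx2, hx1, map_zero]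
    simpa using this.symm
  · -- spanning
    rw [eq_top_iff]
    intro x _
    have h1 : x + D (D x) ∈ LinearMap.ker D := by
      rw [hmemD, map_add, hD3]
      abel
    have h2 : -(D (D x)) ∈ LinearMap.ker (D ∘ₗ D + LinearMap.id) := by
      rw [hmem, map_neg, map_neg, hD4]
    have : x = (x + D (D x)) + (-(D (D x))) := by abel
    rw [this]
    exact Submodule.add_mem_sup h1 h2
  · -- g⁺ is a subalgebra
    intro x hx y hy
    rw [hmemD] at hx hy ⊢
    rw [hder, hx, hy, zero_lie, lie_zero, add_zero]
  · -- [g⁻, g⁻] ⊆ g⁺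
    intro x hx y hy
    rw [hmem] at hx hy
    rw [hmemD]
    exact key x y hx hy
  · -- [g⁺, g⁻] ⊆ g⁻
    intro x hx y hy
    rw [hmemD] at hx
    rw [hmem] at hy ⊢
    rw [hder, hx, zero_lie, zero_add, hder, hx, zero_lie, zero_add, hy, lie_neg]
  · -- the automorphism τ
    refine ⟨LinearEquiv.ofLinear L L ?_ ?_, ?_, ?_, ?_, ?_⟩
    · ext x; exact hLinv x
    · ext x; exact hLinv x
    · intro x hx
      rw [hmemD] at hx
      show L x = x
      rw [hLapp, hx, map_zero, smul_zero, add_zero]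
    · intro x hx
      rw [hmem] at hx
      show L x = -x
      rw [hLapp, hx]
      module
    · intro x y
      show L ⁅x, y⁆ = ⁅L x, L y⁆
      have hDDbr : D (D ⁅x, y⁆) =
          ⁅D (D x), y⁆ + ⁅D x, D y⁆ + ⁅D x, D y⁆ + ⁅x, D (D y)⁆ := by
        rw [hder, map_add, hder, hder]; abel
      rw [hLapp, hLapp, hLapp, hDDbr]
      rw [add_lie, lie_add, lie_add, smul_lie, lie_smul, lie_smul, smul_lie,
        hkey2]
      module
    · intro x
      show L (θ x) = θ (L x)
      have hDDθ : D (D (θ x)) = θ (D (D x)) := by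
        rw [hDθ, map_neg, hDθ, neg_neg]
      rw [hLapp, hLapp, hDDθ, map_add, map_smul]
end

section
/- Let l be a finite-dimensional real Lie algebra, l' ⊆ l a subalgebra, (a,⟨·,·⟩_a) an orthogonal l-module of signature (m,m), and a' ⊆ a an m-dimensional isotropic l'-invariant subspace. Let (α,γ) with α ∈ Hom(Λ²l,a), γ ∈ Hom(Λ³l,ℝ) satisfy the cocycle conditions making d = d_{α,γ}(l,a) a metric Lie algebra, and assume α(l',l') ⊆ a' and γ(l',l',l') = 0. Then h := Ann(l') ⊕ a' ⊕ l' ⊆ d is an isotropic subalgebra of dimension dim d / 2, i.e. (d, h) is a Manin pair. -/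
lemma finrank_submodule_prod {R M N : Type*} [Field R]
    [AddCommGroup M] [AddCommGroup N] [Module R M] [Module R N]
    (p : Submodule R M) (q : Submodule R N) [Module.Finite R p] [Module.Finite R q] :
    Module.finrank R ↥(p.prod q) = Module.finrank R ↥p + Module.finrank R ↥q := by
  have e : ↥(p.prod q) ≃ₗ[R] ↥p × ↥q :=
    { toFun := fun x => (⟨x.1.1, x.2.1⟩, ⟨x.1.2, x.2.2⟩)
      map_add' := fun _ _ => rfl
      map_smul' := fun _ _ => rfl
      invFun := fun y => ⟨(y.1.1, y.2.1), ⟨y.1.2, y.2.2⟩⟩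
      left_inv := fun _ => rfl
      right_inv := fun _ => rfl }
  rw [e.finrank_eq, Module.finrank_prod]

/-- Construction of Manin pairs from quadratic extensions: if `l' ⊆ l` is a subalgebra,
`a` has signature `(m,m)`, `a' ⊆ a` is an `m`-dimensional isotropic `l'`-invariant
subspace, and `(α,γ)` satisfies the cocycle conditions (Jacobi identity) together with
`α(l',l') ⊆ a'` and `γ(l',l',l') = 0`, then `h = Ann(l') ⊕ a' ⊕ l'` is an isotropic
subalgebra of `d = d_{α,γ}(l,a)` of half the dimension of `d`, i.e. `(d,h)` is a Manin
pair. -/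
theorem manin_pair_from_quadratic_extension
    (l a : Type*) [LieRing l] [LieAlgebra ℝ l] [FiniteDimensional ℝ l]
    [AddCommGroup a] [Module ℝ a] [FiniteDimensional ℝ a]
    (m : ℕ)
    (Ba : LinearMap.BilinForm ℝ a)
    (hBa_symm : ∀ A B : a, Ba A B = Ba B A)
    (hBa_nd : Ba.Nondegenerate)
    -- `a` has signature (m, m)
    (hsig : ∃ b : Module.Basis (Fin (m + m)) ℝ a,
      (∀ i j, i ≠ j → Ba (b i) (b j) = 0) ∧
      (∀ i : Fin (m + m), (i : ℕ) < m → Ba (b i) (b i) = -1) ∧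
      (∀ i : Fin (m + m), m ≤ (i : ℕ) → Ba (b i) (b i) = 1))
    (ρ : l →ₗ[ℝ] a →ₗ[ℝ] a)
    (hρrep : ∀ L₁ L₂ : l, ρ ⁅L₁, L₂⁆ = ρ L₁ ∘ₗ ρ L₂ - ρ L₂ ∘ₗ ρ L₁)
    (hρorth : ∀ (L : l) (A B : a), Ba (ρ L A) B + Ba A (ρ L B) = 0)
    (α : l →ₗ[ℝ] l →ₗ[ℝ] a) (hα : ∀ L : l, α L L = 0)
    (γ : l →ₗ[ℝ] l →ₗ[ℝ] l →ₗ[ℝ] ℝ)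
    (hγ1 : ∀ L M : l, γ L L M = 0) (hγ2 : ∀ L M : l, γ L M M = 0)
    -- the cocycle condition : the bracket satisfies the Jacobi identity
    (hJacobi : ∀ x y z : Module.Dual ℝ l × a × l,
      dBracket Ba ρ α γ x (dBracket Ba ρ α γ y z)
        + dBracket Ba ρ α γ y (dBracket Ba ρ α γ z x)
        + dBracket Ba ρ α γ z (dBracket Ba ρ α γ x y) = 0)
    (l' : LieSubalgebra ℝ l)
    (a' : Submodule ℝ a)
    (ha'iso : ∀ x ∈ a', ∀ y ∈ a', Ba x y = 0)
    (ha'dim : Module.finrank ℝ ↥a' = m)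
    (ha'inv : ∀ L ∈ l', ∀ A ∈ a', ρ L A ∈ a')
    (hαl' : ∀ L₁ ∈ l', ∀ L₂ ∈ l', α L₁ L₂ ∈ a')
    (hγl' : ∀ L₁ ∈ l', ∀ L₂ ∈ l', ∀ L₃ ∈ l', γ L₁ L₂ L₃ = 0) :
    (∀ x ∈ ((l'.toSubmodule.dualAnnihilator).prod (a'.prod l'.toSubmodule) :
        Submodule ℝ (Module.Dual ℝ l × a × l)),
      ∀ y ∈ ((l'.toSubmodule.dualAnnihilator).prod (a'.prod l'.toSubmodule) :
        Submodule ℝ (Module.Dual ℝ l × a × l)),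
      dInner Ba x y = 0 ∧ dBracket Ba ρ α γ x y ∈
        ((l'.toSubmodule.dualAnnihilator).prod (a'.prod l'.toSubmodule) :
          Submodule ℝ (Module.Dual ℝ l × a × l))) ∧
    2 * Module.finrank ℝ
        ↥((l'.toSubmodule.dualAnnihilator).prod (a'.prod l'.toSubmodule))
      = Module.finrank ℝ (Module.Dual ℝ l × a × l) := by
  constructor
  · rintro ⟨Z₁, A₁, L₁⟩ hx ⟨Z₂, A₂, L₂⟩ hy
    simp only [Submodule.mem_prod] at hx hy
    obtain ⟨hZ₁, hA₁, hL₁⟩ := hx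
    obtain ⟨hZ₂, hA₂, hL₂⟩ := hy
    rw [Submodule.mem_dualAnnihilator] at hZ₁ hZ₂
    constructor
    · simp only [dInner]
      rw [ha'iso A₁ hA₁ A₂ hA₂, hZ₁ L₂ hL₂, hZ₂ L₁ hL₁]
      ring
    · simp only [Submodule.mem_prod, dBracket]
      refine ⟨?_, ?_, ?_⟩
      · rw [Submodule.mem_dualAnnihilator]
        intro w hw
        simp only [LinearMap.add_apply, LinearMap.sub_apply, LinearMap.comp_apply,
          LinearMap.flip_apply, LieAlgebra.ad_apply]
        have hflip : Ba.flip A₂ ((ρ w) A₁) = Ba ((ρ w) A₁) A₂ := rfl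
        rw [hflip, hγl' L₁ hL₁ L₂ hL₂ w hw,
          hBa_symm A₂ (α L₁ w), ha'iso _ (hαl' L₁ hL₁ w hw) A₂ hA₂,
          hBa_symm A₁ (α L₂ w), ha'iso _ (hαl' L₂ hL₂ w hw) A₁ hA₁,
          ha'iso _ (ha'inv w hw A₁ hA₁) A₂ hA₂,
          hZ₂ ⁅L₁, w⁆ (l'.lie_mem hL₁ hw), hZ₁ ⁅L₂, w⁆ (l'.lie_mem hL₂ hw)]
        ring
      · exact a'.sub_mem (a'.add_mem (hαl' L₁ hL₁ L₂ hL₂) (ha'inv L₁ hL₁ A₂ hA₂))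
          (ha'inv L₂ hL₂ A₁ hA₁)
      · exact l'.lie_mem hL₁ hL₂
  · obtain ⟨b, -, -, -⟩ := hsig
    have hfa : Module.finrank ℝ a = m + m := by
      rw [Module.finrank_eq_card_basis b, Fintype.card_fin]
    have hann : Module.finrank ℝ ↥(l'.toSubmodule.dualAnnihilator)
        + Module.finrank ℝ ↥l'.toSubmodule = Module.finrank ℝ l := by
      rw [← (Subspace.quotEquivAnnihilator l'.toSubmodule).finrank_eq]
      exact Submodule.finrank_quotient_add_finrank _
    rw [finrank_submodule_prod, finrank_submodule_prod, ha'dim,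
      Module.finrank_prod, Module.finrank_prod, Subspace.dual_finrank_eq, hfa]
    omega
end
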